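/- Let d ≥ 3, let ψ be a d-monotone Archimedean generator with pseudo-inverse φ and Williamson measure γ, let C = C_ψ and μ_C the associated measure. Then: (i) for every t ∈ (0,1), μ_C(L_t) = γ({1/φ(t)}); (ii) if ψ is strict then μ_C(L_0) = 0, and if ψ is non-strict (φ(0) < ∞) then μ_C(L_0) = γ({1/φ(0)}); (iii) the Kendall distribution function satisfies F_K^d(t) := μ_C({x ∈ [0,1]^d : C_ψ(x) ≤ t}) = γ([0, 1/φ(t)]) for every t ∈ (0,1). -/

import Mathlib

open MeasureTheory Set Filter Topology
open scoped ENNReal NNReal Classical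

noncomputable section

/-- Extension of a generator `ψ` to `[0,∞]` with the convention `ψ(∞) := 0`. -/
def psiExt (ψ : ℝ → ℝ) (z : ℝ≥0∞) : ℝ := if z = ∞ then 0 else ψ z.toReal

/-- The pseudo-inverse `φ(y) = inf {z ∈ [0,∞] : ψ(z) = y}` of a generator. -/
def pseudoInv (ψ : ℝ → ℝ) (y : ℝ) : ℝ≥0∞ := sInf {z : ℝ≥0∞ | psiExt ψ z = y}

/-- An Archimedean generator: `ψ : [0,∞) → [0,1]` is continuous, non-increasing,
satisfies `ψ 0 = 1` and `ψ(z) → 0` as `z → ∞`, and is strictly decreasing on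
`[0, inf {z ∈ [0,∞] : ψ z = 0}]`. -/
structure IsGenerator (ψ : ℝ → ℝ) : Prop where
  continuousOn : ContinuousOn ψ (Ici 0)
  mem_Icc : ∀ z : ℝ, 0 ≤ z → ψ z ∈ Icc (0 : ℝ) 1
  map_zero : ψ 0 = 1
  tendsto_atTop : Tendsto ψ atTop (𝓝 0)
  antitoneOn : AntitoneOn ψ (Ici 0)
  strictAnti : ∀ ⦃x y : ℝ⦄, 0 ≤ x → x < y → ENNReal.ofReal y ≤ pseudoInv ψ 0 → ψ y < ψ x

/-- The left-hand derivative `D⁻f`. -/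
def leftDeriv (f : ℝ → ℝ) (z : ℝ) : ℝ := derivWithin f (Iio z) z

/-- The right-hand derivative `D⁺f`. -/
def rightDeriv (f : ℝ → ℝ) (z : ℝ) : ℝ := derivWithin f (Ioi z) z

/-- A `d`-monotone Archimedean generator: the derivatives `ψ⁽ᵏ⁾` exist on `(0,∞)` for
`k = 1,…,d-2`, and `(-1)^(d-2) · ψ^(d-2)` is non-negative, non-increasing and convex
on `(0,∞)`. -/
structure IsdMonotoneGenerator (d : ℕ) (ψ : ℝ → ℝ) : Prop where
  toIsGenerator : IsGenerator ψ
  differentiable : ∀ k : ℕ, k < d - 2 → ∀ z : ℝ, 0 < z → DifferentiableAt ℝ (deriv^[k] ψ) z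
  nonneg : ∀ z : ℝ, 0 < z → 0 ≤ (-1 : ℝ) ^ (d - 2) * deriv^[d - 2] ψ z
  antitoneOn : AntitoneOn (fun z => (-1 : ℝ) ^ (d - 2) * deriv^[d - 2] ψ z) (Ioi 0)
  convexOn : ConvexOn ℝ (Ioi 0) (fun z => (-1 : ℝ) ^ (d - 2) * deriv^[d - 2] ψ z)

/-- The `d`-dimensional Archimedean copula generated by `ψ`:
`C_ψ(x) = ψ(φ(x₁) + ⋯ + φ(x_d))` (with `ψ(∞) := 0`). -/
def archCopula (d : ℕ) (ψ : ℝ → ℝ) (x : Fin d → ℝ) : ℝ :=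
  psiExt ψ (∑ i, pseudoInv ψ (x i))

/-- A generator is strict if `ψ(z) > 0` for all `z ≥ 0`. -/
def IsStrictGenerator (ψ : ℝ → ℝ) : Prop := ∀ z : ℝ, 0 ≤ z → 0 < ψ z

/-- The level set `L_t = {x ∈ [0,1]^d : C_ψ(x) = t}`. -/
def levelSet (d : ℕ) (ψ : ℝ → ℝ) (t : ℝ) : Set (Fin d → ℝ) :=
  {x | (∀ i, x i ∈ Icc (0 : ℝ) 1) ∧ archCopula d ψ x = t}

/-- The Williamson transform `(W_d γ)(z) = ∫ (1 - tz)₊^(d-1) dγ(t)`. -/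
def williamson (d : ℕ) (γ : Measure ℝ) (z : ℝ) : ℝ :=
  ∫ t, max (1 - t * z) 0 ^ (d - 1) ∂γ

/-- The class `P_{W_d}`: Borel probability measures on `[0,∞)` with `γ({0}) = 0` and
`∫_{[0,1]} (1-t)^(d-1) dγ(t) = 1/2`. -/
def memPW (d : ℕ) (γ : Measure ℝ) : Prop :=
  IsProbabilityMeasure γ ∧ γ (Iio 0) = 0 ∧ γ {0} = 0 ∧
    ∫ t in Icc (0 : ℝ) 1, (1 - t) ^ (d - 1) ∂γ = 1 / 2

/-!
The map `x ↦ (φ(xᵢ))ᵢ` pushes `μ_C` forward to the law of `S / T` on `[0,∞]ᵈ`, where `S` is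
uniform on the standard simplex and `T ∼ γ` is independent of `S` (the McNeil–Nešlehová
representation). Both measures give the orthant `∏ᵢ [zᵢ, ∞]` the mass `ψ(z₁ + ⋯ + z_d)`: for
`μ_C` because the orthant pulls back to the box `∏ᵢ [0, ψ(zᵢ)]`, for the law of `S / T` because
the part of the simplex above a point is a scaled copy of the simplex, so that integrating over
`T` produces the Williamson transform. As the coordinates of `S` sum to `1`, the sum
`∑ φ(xᵢ)` has the law of `1 / T`, hence `C_ψ(x) = ψ(∑ φ(xᵢ))` has the law of `ψ(1 / T)`, from
which every level-set mass is read off.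
-/

section Generator

variable {ψ : ℝ → ℝ}

@[simp]
theorem psiExt_top (ψ : ℝ → ℝ) : psiExt ψ ∞ = 0 := if_pos rfl

theorem psiExt_of_ne_top (ψ : ℝ → ℝ) {z : ℝ≥0∞} (hz : z ≠ ∞) : psiExt ψ z = ψ z.toReal :=
  if_neg hz

namespace IsGenerator

theorem psiExt_mem_Icc (hψ : IsGenerator ψ) (z : ℝ≥0∞) : psiExt ψ z ∈ Icc 0 1 := by
  rcases eq_or_ne z ∞ with rfl | hz
  · simp
  · rw [psiExt_of_ne_top ψ hz]
    exact hψ.mem_Icc _ ENNReal.toReal_nonneg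

theorem psiExt_zero (hψ : IsGenerator ψ) : psiExt ψ 0 = 1 := by
  simp [psiExt, hψ.map_zero]

theorem antitone_psiExt (hψ : IsGenerator ψ) : Antitone (psiExt ψ) := by
  intro u v huv
  rcases eq_or_ne v ∞ with rfl | hv
  · simpa using (hψ.psiExt_mem_Icc u).1
  have hu : u ≠ ∞ := ne_top_of_le_ne_top hv huv
  rw [psiExt_of_ne_top ψ hu, psiExt_of_ne_top ψ hv]
  exact hψ.antitoneOn ENNReal.toReal_nonneg ENNReal.toReal_nonneg
    (ENNReal.toReal_mono hv huv)

theorem continuous_psiExt (hψ : IsGenerator ψ) : Continuous (psiExt ψ) := by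
  refine continuous_iff_continuousAt.2 fun z => ?_
  rcases eq_or_ne z ∞ with rfl | hz
  · refine tendsto_order.2 ⟨fun a ha => ?_, fun a ha => ?_⟩
    · exact Eventually.of_forall fun u => ha.trans_le (hψ.psiExt_mem_Icc u).1
    obtain ⟨M, hM, hM0⟩ :=
      ((hψ.tendsto_atTop.eventually_lt_const (by simpa using ha)).and
        (eventually_ge_atTop 0)).exists
    filter_upwards [Ioi_mem_nhds (ENNReal.ofReal_lt_top (r := M))] with u hu
    calc psiExt ψ u ≤ psiExt ψ (ENNReal.ofReal M) := hψ.antitone_psiExt (le_of_lt hu)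
      _ = ψ M := by rw [psiExt_of_ne_top ψ ENNReal.ofReal_ne_top, ENNReal.toReal_ofReal hM0]
      _ < a := hM
  · have hψz : ContinuousAt (ψ ∘ ENNReal.toReal) z :=
      ((hψ.continuousOn _ ENNReal.toReal_nonneg).comp
        (ENNReal.continuousAt_toReal hz).continuousWithinAt
        fun _ _ => ENNReal.toReal_nonneg).continuousAt univ_mem
    refine hψz.congr ?_
    filter_upwards [isOpen_ne.mem_nhds hz] with u hu
    exact (psiExt_of_ne_top ψ hu).symm

theorem psiExt_pseudoInv (hψ : IsGenerator ψ) {t : ℝ} (ht : t ∈ Icc 0 1) :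
    psiExt ψ (pseudoInv ψ t) = t := by
  have hrange : t ∈ range (psiExt ψ) :=
    intermediate_value_univ ∞ 0 hψ.continuous_psiExt (by simpa [hψ.psiExt_zero] using ht)
  exact IsClosed.sInf_mem hrange (isClosed_eq hψ.continuous_psiExt continuous_const)

theorem pseudoInv_le_iff (hψ : IsGenerator ψ) {t : ℝ} (ht : t ∈ Icc 0 1) {z : ℝ≥0∞} :
    pseudoInv ψ t ≤ z ↔ psiExt ψ z ≤ t := by
  refine ⟨fun h => hψ.psiExt_pseudoInv ht ▸ hψ.antitone_psiExt h, fun h => ?_⟩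
  obtain ⟨w, hwz, hw⟩ := intermediate_value_Icc' (zero_le : 0 ≤ z) hψ.continuous_psiExt.continuousOn
    ⟨h, hψ.psiExt_zero ▸ ht.2⟩
  exact (show pseudoInv ψ t ≤ w from sInf_le hw).trans hwz.2

theorem strictAntiOn_psiExt (hψ : IsGenerator ψ) :
    StrictAntiOn (psiExt ψ) (Iic (pseudoInv ψ 0)) := by
  intro u _ v hv huv
  have hu_pos : 0 < psiExt ψ u := by
    refine (hψ.psiExt_mem_Icc u).1.lt_of_ne' fun hu => ?_
    have := (hψ.pseudoInv_le_iff (left_mem_Icc.2 zero_le_one)).2 hu.le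
    exact (huv.trans_le hv).not_ge this
  rcases eq_or_ne v ∞ with rfl | hv_top
  · simpa using hu_pos
  have hu_top : u ≠ ∞ := huv.ne_top
  rw [psiExt_of_ne_top ψ hu_top, psiExt_of_ne_top ψ hv_top]
  exact hψ.strictAnti ENNReal.toReal_nonneg (ENNReal.toReal_strict_mono hv_top huv)
    (by rwa [ENNReal.ofReal_toReal hv_top])

theorem le_pseudoInv_iff (hψ : IsGenerator ψ) {x : ℝ} (hx : x ∈ Icc 0 1) {z : ℝ≥0∞}
    (hz : z ≤ pseudoInv ψ 0) : z ≤ pseudoInv ψ x ↔ x ≤ psiExt ψ z := by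
  refine ⟨fun h => hψ.psiExt_pseudoInv hx ▸ hψ.antitone_psiExt h, fun h => ?_⟩
  by_contra! hlt
  have := hψ.strictAntiOn_psiExt (hlt.le.trans hz) hz hlt
  rw [hψ.psiExt_pseudoInv hx] at this
  exact this.not_ge h

theorem pseudoInv_psiExt (hψ : IsGenerator ψ) {z : ℝ≥0∞} (hz : z ≤ pseudoInv ψ 0) :
    pseudoInv ψ (psiExt ψ z) = z :=
  le_antisymm (sInf_le rfl) ((hψ.le_pseudoInv_iff (hψ.psiExt_mem_Icc z) hz).2 le_rfl)

theorem psiExt_eq_zero_iff (hψ : IsGenerator ψ) {z : ℝ≥0∞} :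
    psiExt ψ z = 0 ↔ pseudoInv ψ 0 ≤ z := by
  rw [hψ.pseudoInv_le_iff (left_mem_Icc.2 zero_le_one)]
  exact ⟨le_of_eq, fun h => h.antisymm (hψ.psiExt_mem_Icc z).1⟩

theorem psiExt_eq_iff (hψ : IsGenerator ψ) {t : ℝ} (ht : t ∈ Ioc 0 1) {z : ℝ≥0∞} :
    psiExt ψ z = t ↔ z = pseudoInv ψ t := by
  refine ⟨fun h => ?_, fun h => h ▸ hψ.psiExt_pseudoInv (Ioc_subset_Icc_self ht)⟩
  have hz : z ≤ pseudoInv ψ 0 := by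
    by_contra! hz
    exact ht.1.ne' (h ▸ hψ.psiExt_eq_zero_iff.2 hz.le)
  rw [← h, hψ.pseudoInv_psiExt hz]

theorem pseudoInv_one (hψ : IsGenerator ψ) : pseudoInv ψ 1 = 0 :=
  nonpos_iff_eq_zero.1 (sInf_le hψ.psiExt_zero)

theorem pseudoInv_ne_top (hψ : IsGenerator ψ) {t : ℝ} (ht : t ∈ Ioc 0 1) :
    pseudoInv ψ t ≠ ∞ := fun h => by
  simpa [h, ht.1.ne] using hψ.psiExt_pseudoInv (Ioc_subset_Icc_self ht)

theorem pseudoInv_ne_zero (hψ : IsGenerator ψ) {t : ℝ} (ht : t ∈ Ico 0 1) :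
    pseudoInv ψ t ≠ 0 := fun h => by
  simpa [h, hψ.psiExt_zero, ht.2.ne'] using hψ.psiExt_pseudoInv (Ico_subset_Icc_self ht)

theorem pseudoInv_of_notMem_Icc (hψ : IsGenerator ψ) {t : ℝ} (ht : t ∉ Icc 0 1) :
    pseudoInv ψ t = ∞ := by
  rw [pseudoInv, sInf_eq_top]
  exact fun z hz => absurd (hz ▸ hψ.psiExt_mem_Icc z) ht

theorem measurable_pseudoInv (hψ : IsGenerator ψ) : Measurable (pseudoInv ψ) := by
  have hanti : Antitone fun t : ℝ => pseudoInv ψ (projIcc 0 1 zero_le_one t) := by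
    intro s t hst
    have hs := (projIcc 0 1 zero_le_one s).2
    rw [hψ.pseudoInv_le_iff (projIcc 0 1 zero_le_one t).2, hψ.psiExt_pseudoInv hs]
    exact monotone_projIcc zero_le_one hst
  have heq : pseudoInv ψ = (Icc 0 1).piecewise
      (fun t : ℝ => pseudoInv ψ (projIcc 0 1 zero_le_one t)) fun _ => ∞ := by
    ext1 t
    by_cases ht : t ∈ Icc (0 : ℝ) 1
    · simp [ht, projIcc_of_mem]
    · simp [ht, hψ.pseudoInv_of_notMem_Icc ht]
  rw [heq]
  exact hanti.measurable.piecewise measurableSet_Icc measurable_const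

theorem measurable_pseudoInv_comp {ι : Type*} (hψ : IsGenerator ψ) :
    Measurable fun (x : ι → ℝ) i => pseudoInv ψ (x i) :=
  measurable_pi_lambda _ fun i => hψ.measurable_pseudoInv.comp (measurable_pi_apply i)

end IsGenerator

end Generator

section Simplex

open ProbabilityTheory
open scoped Pointwise

variable {n : ℕ}

def baryCoord (s : Fin n → ℝ) : Fin (n + 1) → ℝ := Fin.cons (1 - ∑ i, s i) s

/-- The standard simplex of `ℝⁿ⁺¹`, seen in `ℝⁿ` through the chart `baryCoord`. -/
def cornerSimplex (n : ℕ) : Set (Fin n → ℝ) := {s | ∀ i, 0 ≤ baryCoord s i}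

theorem sum_baryCoord (s : Fin n → ℝ) : ∑ i, baryCoord s i = 1 := by
  simp [baryCoord, Fin.sum_cons]

theorem continuous_baryCoord : Continuous (baryCoord : (Fin n → ℝ) → Fin (n + 1) → ℝ) := by
  refine continuous_pi fun i => Fin.cases ?_ (fun j => ?_) i
  · simp only [baryCoord, Fin.cons_zero]
    fun_prop
  · simpa [baryCoord] using continuous_apply j

theorem measurableSet_cornerSimplex : MeasurableSet (cornerSimplex n) := by
  rw [cornerSimplex, ofPred_forall]
  exact (isClosed_iInter fun i => isClosed_le continuous_const
    ((continuous_apply i).comp continuous_baryCoord)).measurableSet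

theorem le_baryCoord_iff {b : Fin (n + 1) → ℝ} {s : Fin n → ℝ} :
    (∀ i, b i ≤ baryCoord s i) ↔ ∑ i, s i ≤ 1 - b 0 ∧ ∀ j, Fin.tail b j ≤ s j := by
  simp only [Fin.forall_fin_succ, baryCoord, Fin.cons_zero, Fin.cons_succ, Fin.tail]
  exact and_congr_left' (by constructor <;> intro h <;> linarith)

theorem mem_cornerSimplex_iff {s : Fin n → ℝ} :
    s ∈ cornerSimplex n ↔ ∑ i, s i ≤ 1 ∧ ∀ j, 0 ≤ s j := by
  simpa [cornerSimplex, Fin.tail] using le_baryCoord_iff (b := 0) (s := s)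

theorem setOf_le_baryCoord_eq_vadd_smul {b : Fin (n + 1) → ℝ} (hb : 0 < 1 - ∑ i, b i) :
    {s | ∀ i, b i ≤ baryCoord s i} = Fin.tail b +ᵥ (1 - ∑ i, b i) • cornerSimplex n := by
  ext s
  rw [mem_vadd_set_iff_neg_vadd_mem, mem_smul_set_iff_inv_smul_mem₀ hb.ne', mem_ofPred_eq,
    mem_cornerSimplex_iff, le_baryCoord_iff]
  simp only [Pi.smul_apply, vadd_eq_add, Pi.add_apply, Pi.neg_apply, smul_eq_mul,
    ← Finset.mul_sum, inv_mul_le_iff₀ hb, mul_nonneg_iff_of_pos_left (inv_pos.2 hb),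
    Finset.sum_add_distrib, Finset.sum_neg_distrib, Fin.tail]
  rw [Fin.sum_univ_succ]
  refine and_congr ?_ (forall_congr' fun j => ?_) <;> constructor <;> intro h <;> linarith

theorem setOf_le_baryCoord_subset_singleton {b : Fin (n + 1) → ℝ} (hb : 1 - ∑ i, b i ≤ 0) :
    {s | ∀ i, b i ≤ baryCoord s i} ⊆ {Fin.tail b} := by
  intro s hs
  rw [mem_ofPred_eq, le_baryCoord_iff] at hs
  rw [Fin.sum_univ_succ] at hb
  have hsum : ∑ j, (s j - Fin.tail b j) = 0 := by
    refine le_antisymm ?_ (Finset.sum_nonneg fun j _ => sub_nonneg.2 (hs.2 j))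
    rw [Finset.sum_sub_distrib]
    simp only [Fin.tail]
    linarith [hs.1]
  ext j
  exact sub_eq_zero.1 ((Finset.sum_eq_zero_iff_of_nonneg fun j _ => sub_nonneg.2 (hs.2 j)).1
    hsum j (Finset.mem_univ j))

theorem volume_setOf_le_baryCoord (hn : n ≠ 0) (b : Fin (n + 1) → ℝ) :
    volume {s | ∀ i, b i ≤ baryCoord s i} =
      ENNReal.ofReal (max (1 - ∑ i, b i) 0 ^ n) * volume (cornerSimplex n) := by
  rcases lt_or_ge 0 (1 - ∑ i, b i) with hb | hb
  · rw [setOf_le_baryCoord_eq_vadd_smul hb, measure_vadd, Measure.addHaar_smul,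
      Module.finrank_fin_fun, max_eq_left hb.le, abs_of_nonneg (pow_nonneg hb.le n)]
  · have : Nonempty (Fin n) := ⟨⟨0, Nat.pos_of_ne_zero hn⟩⟩
    rw [max_eq_right hb, zero_pow hn, ENNReal.ofReal_zero, zero_mul]
    exact measure_mono_null (setOf_le_baryCoord_subset_singleton hb) (measure_singleton _)

theorem volume_cornerSimplex_ne_zero : volume (cornerSimplex n) ≠ 0 := by
  have hbox : (univ.pi fun _ => Icc 0 (n : ℝ)⁻¹) ⊆ cornerSimplex n := by
    intro s hs
    simp only [mem_univ_pi, mem_Icc] at hs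
    refine mem_cornerSimplex_iff.2 ⟨?_, fun j => (hs j).1⟩
    calc ∑ j, s j ≤ ∑ _j : Fin n, (n : ℝ)⁻¹ := Finset.sum_le_sum fun j _ => (hs j).2
      _ ≤ 1 := by
        rcases eq_or_ne n 0 with rfl | hn
        · simp
        · simp [hn]
  intro h
  obtain ⟨j, -, hj⟩ :=
    Finset.prod_eq_zero_iff.1 ((volume_pi_pi _).symm.trans (measure_mono_null hbox h))
  simp [j.pos] at hj

theorem volume_cornerSimplex_ne_top : volume (cornerSimplex n) ≠ ∞ := by
  have hcube : cornerSimplex n ⊆ univ.pi fun _ => Icc 0 1 := by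
    intro s hs j _
    have hs := mem_cornerSimplex_iff.1 hs
    exact ⟨hs.2 j, (Finset.single_le_sum (fun j _ => hs.2 j) (Finset.mem_univ j)).trans hs.1⟩
  refine ne_top_of_le_ne_top ?_ (measure_mono hcube)
  rw [volume_pi_pi]
  simp

instance : IsProbabilityMeasure (volume[|cornerSimplex n]) :=
  cond_isProbabilityMeasure_of_finite volume_cornerSimplex_ne_zero volume_cornerSimplex_ne_top

theorem cond_setOf_le_baryCoord (hn : n ≠ 0) {b : Fin (n + 1) → ℝ} (hb : ∀ i, 0 ≤ b i) :
    volume[{s | ∀ i, b i ≤ baryCoord s i} | cornerSimplex n] =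
      ENNReal.ofReal (max (1 - ∑ i, b i) 0 ^ n) := by
  have hsub : {s | ∀ i, b i ≤ baryCoord s i} ⊆ cornerSimplex n :=
    fun s hs i => (hb i).trans (hs i)
  rw [cond_apply measurableSet_cornerSimplex, inter_eq_right.2 hsub,
    volume_setOf_le_baryCoord hn, mul_comm, mul_assoc,
    ENNReal.mul_inv_cancel volume_cornerSimplex_ne_zero volume_cornerSimplex_ne_top, mul_one]

end Simplex

section Williamson

variable {n : ℕ} {γ : Measure ℝ}

theorem williamson_zero (d : ℕ) [IsProbabilityMeasure γ] :
    williamson d γ 0 = 1 := by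
  simp [williamson]

theorem integrable_williamson_integrand [IsFiniteMeasure γ] (hγ : ∀ᵐ r ∂γ, 0 < r) {z : ℝ}
    (hz : 0 ≤ z) (k : ℕ) : Integrable (fun t => max (1 - t * z) 0 ^ k) γ := by
  refine Integrable.mono' (integrable_const 1) (by fun_prop) (hγ.mono fun t ht => ?_)
  rw [Real.norm_eq_abs, abs_of_nonneg (by positivity)]
  exact pow_le_one₀ (le_max_right _ _) (max_le (by nlinarith) zero_le_one)

theorem ofReal_williamson [IsFiniteMeasure γ] (hγ : ∀ᵐ r ∂γ, 0 < r) {z : ℝ} (hz : 0 ≤ z) :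
    ENNReal.ofReal (williamson (n + 1) γ z) =
      ∫⁻ r, ENNReal.ofReal (max (1 - r * z) 0 ^ n) ∂γ := by
  rw [williamson, Nat.add_sub_cancel, ofReal_integral_eq_lintegral_ofReal
    (integrable_williamson_integrand hγ hz n) (Eventually.of_forall fun _ => by positivity)]

theorem IsGenerator.eq_williamson_of_nonneg {ψ : ℝ → ℝ} (hψ : IsGenerator ψ) {d : ℕ}
    [IsProbabilityMeasure γ] (hW : ∀ z, 0 < z → ψ z = williamson d γ z) {z : ℝ} (hz : 0 ≤ z) :
    ψ z = williamson d γ z := by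
  rcases hz.eq_or_lt with rfl | hz
  · rw [hψ.map_zero, williamson_zero]
  · exact hW z hz

end Williamson

section ScaledSimplexLaw

open ProbabilityTheory

variable {n : ℕ} {γ : Measure ℝ}

/-- The law on `[0,∞]ⁿ⁺¹` of `S / T`, with `S` uniform on the standard simplex and `T ∼ γ`
independent of `S`; `R = 1 / T` is the radial part of the McNeil–Nešlehová representation
`R • S`. -/
def scaledSimplexLaw (n : ℕ) (γ : Measure ℝ) : Measure (Fin (n + 1) → ℝ≥0∞) :=
  (γ.prod volume[|cornerSimplex n]).map fun p i => ENNReal.ofReal (baryCoord p.2 i / p.1)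

theorem measurable_ofReal_baryCoord_div :
    Measurable fun (p : ℝ × (Fin n → ℝ)) (i : Fin (n + 1)) =>
      ENNReal.ofReal (baryCoord p.2 i / p.1) :=
  measurable_pi_lambda _ fun i => ENNReal.measurable_ofReal.comp
    ((((continuous_apply i).comp continuous_baryCoord).measurable.comp measurable_snd).div
      measurable_fst)

theorem scaledSimplexLaw_apply {A : Set (Fin (n + 1) → ℝ≥0∞)} (hA : MeasurableSet A) :
    scaledSimplexLaw n γ A = ∫⁻ r,
      volume[{s | (fun i => ENNReal.ofReal (baryCoord s i / r)) ∈ A} | cornerSimplex n] ∂γ := by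
  rw [scaledSimplexLaw, Measure.map_apply measurable_ofReal_baryCoord_div hA,
    Measure.prod_apply (measurable_ofReal_baryCoord_div hA)]
  rfl

theorem scaledSimplexLaw_pi_Ici (hn : n ≠ 0) (hγ : ∀ᵐ r ∂γ, 0 < r)
    {z : Fin (n + 1) → ℝ≥0∞} (hz : ∀ i, z i ≠ ∞) :
    scaledSimplexLaw n γ (univ.pi fun i => Ici (z i)) =
      ∫⁻ r, ENNReal.ofReal (max (1 - r * ∑ i, (z i).toReal) 0 ^ n) ∂γ := by
  rw [scaledSimplexLaw_apply (MeasurableSet.univ_pi fun i => measurableSet_Ici)]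
  refine lintegral_congr_ae (hγ.mono fun r hr => ?_)
  dsimp only
  have hslice : cornerSimplex n ∩
      {s | (fun i => ENNReal.ofReal (baryCoord s i / r)) ∈ univ.pi fun i => Ici (z i)} =
      cornerSimplex n ∩ {s | ∀ i, r * (z i).toReal ≤ baryCoord s i} := by
    ext s
    simp only [mem_inter_iff, mem_ofPred_eq, mem_univ_pi, mem_Ici, and_congr_right_iff]
    refine fun hs => forall_congr' fun i => ?_
    rw [ENNReal.le_ofReal_iff_toReal_le (hz i) (div_nonneg (hs i) hr.le), le_div_iff₀ hr,
      mul_comm]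
  rw [cond_apply measurableSet_cornerSimplex, hslice, ← cond_apply measurableSet_cornerSimplex,
    cond_setOf_le_baryCoord hn fun i => mul_nonneg hr.le ENNReal.toReal_nonneg, Finset.mul_sum]

theorem scaledSimplexLaw_pi_Ici_eq_psiExt {ψ : ℝ → ℝ} (hψ : IsGenerator ψ) (hn : n ≠ 0)
    [IsProbabilityMeasure γ] (hγ : ∀ᵐ r ∂γ, 0 < r)
    (hW : ∀ z, 0 < z → ψ z = williamson (n + 1) γ z) (z : Fin (n + 1) → ℝ≥0∞) :
    scaledSimplexLaw n γ (univ.pi fun i => Ici (z i)) = ENNReal.ofReal (psiExt ψ (∑ i, z i)) := by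
  by_cases hz : ∃ i, z i = ∞
  · obtain ⟨i, hi⟩ := hz
    have hslice (r : ℝ) :
        {s | (fun i => ENNReal.ofReal (baryCoord s i / r)) ∈ univ.pi fun i => Ici (z i)} = ∅ :=
      eq_empty_of_forall_notMem fun s hs => by
        have := hs i (mem_univ i)
        rw [mem_Ici, hi, top_le_iff] at this
        exact ENNReal.ofReal_ne_top this
    rw [scaledSimplexLaw_apply (MeasurableSet.univ_pi fun i => measurableSet_Ici),
      ENNReal.sum_eq_top.2 ⟨i, Finset.mem_univ i, hi⟩]
    simp only [hslice, measure_empty, lintegral_zero, psiExt_top, ENNReal.ofReal_zero]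
  · have hz : ∀ i, z i ≠ ∞ := fun i hi => hz ⟨i, hi⟩
    have hZ : 0 ≤ ∑ i, (z i).toReal := Finset.sum_nonneg fun i _ => ENNReal.toReal_nonneg
    rw [scaledSimplexLaw_pi_Ici hn hγ hz, psiExt_of_ne_top ψ (ENNReal.sum_ne_top.2 fun i _ => hz i),
      ENNReal.toReal_sum fun i _ => hz i, hψ.eq_williamson_of_nonneg hW hZ, ofReal_williamson hγ hZ]

theorem map_sum_scaledSimplexLaw (hγ : ∀ᵐ r ∂γ, 0 < r) :
    (scaledSimplexLaw n γ).map (fun y => ∑ i, y i) = γ.map fun r => ENNReal.ofReal r⁻¹ := by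
  have hsum : Measurable fun y : Fin (n + 1) → ℝ≥0∞ => ∑ i, y i := by fun_prop
  have hinv : Measurable fun r : ℝ => ENNReal.ofReal r⁻¹ := by fun_prop
  ext B hB
  rw [Measure.map_apply hsum hB, Measure.map_apply hinv hB, scaledSimplexLaw_apply (hsum hB),
    ← lintegral_indicator_one (hinv hB)]
  refine lintegral_congr_ae (hγ.mono fun r hr => ?_)
  have hsum_bary : ∀ s ∈ cornerSimplex n,
      ∑ i, ENNReal.ofReal (baryCoord s i / r) = ENNReal.ofReal r⁻¹ := fun s hs => by
    rw [← ENNReal.ofReal_sum_of_nonneg fun i _ => div_nonneg (hs i) hr.le, ← Finset.sum_div,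
      sum_baryCoord, one_div]
  dsimp only
  rw [← cond_inter_self measurableSet_cornerSimplex]
  by_cases hrB : ENNReal.ofReal r⁻¹ ∈ B
  · rw [inter_eq_left.2 fun s hs => by rw [mem_ofPred_eq, mem_preimage, hsum_bary s hs]; exact hrB,
      cond_apply_self volume_cornerSimplex_ne_zero volume_cornerSimplex_ne_top]
    simp [hrB]
  · have hempty : cornerSimplex n ∩
        {s | (fun i => ENNReal.ofReal (baryCoord s i / r)) ∈ (fun y => ∑ i, y i) ⁻¹' B} = ∅ :=
      eq_empty_of_forall_notMem fun s ⟨hs, hsB⟩ =>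
        hrB (by rwa [mem_ofPred_eq, mem_preimage, hsum_bary s hs] at hsB)
    rw [hempty]
    simp [hrB]

end ScaledSimplexLaw

theorem MeasureTheory.Measure.ext_of_pi_Ici {ι α : Type*} [Fintype ι] [LinearOrder α]
    [OrderBot α] [TopologicalSpace α] [OrderTopology α] [SecondCountableTopology α]
    [MeasurableSpace α] [BorelSpace α] {μ ν : Measure (ι → α)} [IsFiniteMeasure μ]
    (h : ∀ z : ι → α, μ (univ.pi fun i => Ici (z i)) = ν (univ.pi fun i => Ici (z i))) :
    μ = ν := by
  have hspan : IsCountablySpanning (range (Ici : α → Set α)) :=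
    ⟨fun _ => Ici ⊥, fun _ => mem_range_self _, by simp [iUnion_const]⟩
  have hgen : MeasurableSpace.generateFrom (range (Ici : α → Set α)) = ‹MeasurableSpace α› :=
    (borel_eq_generateFrom_Ici α).symm.trans BorelSpace.measurable_eq.symm
  refine ext_of_generate_finite _ (generateFrom_eq_pi (fun _ => hgen) fun _ => hspan).symm
    (IsPiSystem.pi fun _ => isPiSystem_Ici) ?_ (by simpa using h ⊥)
  rintro _ ⟨s, hs, rfl⟩
  choose z hz using fun i => hs i (mem_univ i)
  simpa only [hz] using h z

section CopulaMeasure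

variable {ι : Type*} [Fintype ι] {ψ : ℝ → ℝ}

def IsArchimedeanCopulaMeasure (ψ : ℝ → ℝ) (μ : Measure (ι → ℝ)) : Prop :=
  ∀ x : ι → ℝ, (∀ i, x i ∈ Icc (0 : ℝ) 1) →
    μ (univ.pi fun i => Icc 0 (x i)) = ENNReal.ofReal (psiExt ψ (∑ i, pseudoInv ψ (x i)))

namespace IsArchimedeanCopulaMeasure

variable {μ : Measure (ι → ℝ)} [IsProbabilityMeasure μ]

theorem measure_compl_cube (hμ : IsArchimedeanCopulaMeasure ψ μ) (hψ : IsGenerator ψ) :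
    μ (univ.pi fun _ => Icc 0 1)ᶜ = 0 := by
  have hcube := hμ 1 fun _ => right_mem_Icc.2 zero_le_one
  simp only [Pi.one_apply, hψ.pseudoInv_one, Finset.sum_const_zero, hψ.psiExt_zero,
    ENNReal.ofReal_one] at hcube
  rw [measure_compl (MeasurableSet.univ_pi fun _ => measurableSet_Icc) (measure_ne_top _ _),
    hcube, measure_univ, tsub_self]

theorem measure_le_pseudoInv (hμ : IsArchimedeanCopulaMeasure ψ μ) (hψ : IsGenerator ψ)
    (z : ι → ℝ≥0∞) :
    μ {x | ∀ i, z i ≤ pseudoInv ψ (x i)} = ENNReal.ofReal (psiExt ψ (∑ i, z i)) := by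
  set box := univ.pi fun i => Icc 0 (psiExt ψ (z i))
  have hbox : μ box = ENNReal.ofReal (psiExt ψ (∑ i, pseudoInv ψ (psiExt ψ (z i)))) :=
    hμ _ fun i => hψ.psiExt_mem_Icc (z i)
  have hbox_cube : box ⊆ univ.pi fun _ => Icc 0 1 :=
    pi_mono fun i _ => Icc_subset_Icc_right (hψ.psiExt_mem_Icc (z i)).2
  have hsub : {x | ∀ i, z i ≤ pseudoInv ψ (x i)} ∩ univ.pi (fun _ => Icc 0 1) ⊆ box :=
    fun x ⟨hx, hcube⟩ i _ => ⟨(hcube i trivial).1,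
      hψ.psiExt_pseudoInv (hcube i trivial) ▸ hψ.antitone_psiExt (hx i)⟩
  rw [← measure_inter_conull (hμ.measure_compl_cube hψ)]
  by_cases hz : ∀ i, z i ≤ pseudoInv ψ 0
  · have hbox_sub : box ⊆ {x | ∀ i, z i ≤ pseudoInv ψ (x i)} ∩ univ.pi (fun _ => Icc 0 1) :=
      fun x hx => ⟨fun i => (hψ.le_pseudoInv_iff (hbox_cube hx i trivial) (hz i)).2
        (hx i trivial).2, hbox_cube hx⟩
    rw [hsub.antisymm hbox_sub, hbox]
    simp only [hψ.pseudoInv_psiExt (hz _)]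
  · -- Some `z i` exceeds `φ(0)`: both sides vanish, the left one because `xᵢ = 0` is forced.
    obtain ⟨i, hi⟩ : ∃ i, pseudoInv ψ 0 ≤ z i := by
      simp only [not_forall, not_le] at hz
      exact hz.imp fun _ => le_of_lt
    have hsum_eq_zero (f : ι → ℝ≥0∞) (hf : pseudoInv ψ 0 ≤ f i) : psiExt ψ (∑ j, f j) = 0 :=
      hψ.psiExt_eq_zero_iff.2
        (hf.trans (Finset.single_le_sum (fun j _ => zero_le) (Finset.mem_univ i)))
    rw [hsum_eq_zero z hi, ENNReal.ofReal_zero]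
    refine measure_mono_null hsub (hbox.trans ?_)
    rw [hsum_eq_zero _ (by rw [hψ.psiExt_eq_zero_iff.2 hi]), ENNReal.ofReal_zero]

end IsArchimedeanCopulaMeasure

end CopulaMeasure

namespace IsArchimedeanCopulaMeasure

variable {n : ℕ} {ψ : ℝ → ℝ} {μ : Measure (Fin (n + 1) → ℝ)} [IsProbabilityMeasure μ]
  {γ : Measure ℝ} [IsProbabilityMeasure γ]

theorem map_pseudoInv (hμ : IsArchimedeanCopulaMeasure ψ μ) (hψ : IsGenerator ψ) (hn : n ≠ 0)
    (hγ : ∀ᵐ r ∂γ, 0 < r) (hW : ∀ z, 0 < z → ψ z = williamson (n + 1) γ z) :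
    μ.map (fun x i => pseudoInv ψ (x i)) = scaledSimplexLaw n γ := by
  refine Measure.ext_of_pi_Ici fun z => ?_
  rw [Measure.map_apply hψ.measurable_pseudoInv_comp (MeasurableSet.univ_pi fun _ => measurableSet_Ici),
    scaledSimplexLaw_pi_Ici_eq_psiExt hψ hn hγ hW]
  convert hμ.measure_le_pseudoInv hψ z using 2
  ext x
  simp only [mem_preimage, mem_univ_pi, mem_Ici, mem_ofPred_eq]

theorem measure_archCopula_mem (hμ : IsArchimedeanCopulaMeasure ψ μ) (hψ : IsGenerator ψ)
    (hn : n ≠ 0) (hγ : ∀ᵐ r ∂γ, 0 < r) (hW : ∀ z, 0 < z → ψ z = williamson (n + 1) γ z)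
    {A : Set ℝ} (hA : MeasurableSet A) :
    μ {x | (∀ i, x i ∈ Icc 0 1) ∧ archCopula (n + 1) ψ x ∈ A} =
      γ ((fun r => psiExt ψ (ENNReal.ofReal r⁻¹)) ⁻¹' A) := by
  have hsum : Measurable fun y : Fin (n + 1) → ℝ≥0∞ => ∑ i, y i := by fun_prop
  have hA' : MeasurableSet (psiExt ψ ⁻¹' A) := hψ.continuous_psiExt.measurable hA
  have hset : {x | (∀ i, x i ∈ Icc 0 1) ∧ archCopula (n + 1) ψ x ∈ A} =
      (fun x i => pseudoInv ψ (x i)) ⁻¹' ((fun y => ∑ i, y i) ⁻¹' (psiExt ψ ⁻¹' A)) ∩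
        univ.pi fun _ => Icc 0 1 := by
    ext x
    simp only [mem_ofPred_eq, mem_inter_iff, mem_preimage, mem_univ_pi, archCopula]
    exact and_comm
  rw [hset, measure_inter_conull (hμ.measure_compl_cube hψ), ← Measure.map_apply hψ.measurable_pseudoInv_comp (hsum hA'),
    hμ.map_pseudoInv hψ hn hγ hW, ← Measure.map_apply hsum hA', map_sum_scaledSimplexLaw hγ,
    Measure.map_apply (by fun_prop) hA']
  rfl

end IsArchimedeanCopulaMeasure

theorem setOf_ofReal_inv_eq {c : ℝ≥0∞} (hc0 : c ≠ 0) (hc : c ≠ ∞) :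
    {r : ℝ | ENNReal.ofReal r⁻¹ = c} = {c.toReal⁻¹} := by
  ext r
  simp only [mem_ofPred_eq, mem_singleton_iff]
  constructor
  · rintro rfl
    rcases le_or_gt r 0 with hr | hr
    · exact absurd (ENNReal.ofReal_eq_zero.2 (inv_nonpos.2 hr)) hc0
    · rw [ENNReal.toReal_ofReal (inv_nonneg.2 hr.le), inv_inv]
  · rintro rfl
    rw [inv_inv, ENNReal.ofReal_toReal hc]

theorem setOf_le_ofReal_inv {c : ℝ≥0∞} (hc0 : c ≠ 0) (hc : c ≠ ∞) :
    {r : ℝ | c ≤ ENNReal.ofReal r⁻¹} = Ioc 0 c.toReal⁻¹ := by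
  ext r
  simp only [mem_ofPred_eq, mem_Ioc]
  rcases le_or_gt r 0 with hr | hr
  · simp [hr.not_gt, ENNReal.ofReal_eq_zero.2 (inv_nonpos.2 hr), hc0]
  · rw [ENNReal.le_ofReal_iff_toReal_le hc (inv_nonneg.2 hr.le),
      le_inv_comm₀ (ENNReal.toReal_pos hc0 hc) hr]
    exact (and_iff_right hr).symm

namespace IsGenerator

variable {ψ : ℝ → ℝ}

theorem preimage_psiExt_ofReal_inv_singleton (hψ : IsGenerator ψ) {t : ℝ} (ht : t ∈ Ioo 0 1) :
    (fun r : ℝ => psiExt ψ (ENNReal.ofReal r⁻¹)) ⁻¹' {t} = {(pseudoInv ψ t).toReal⁻¹} := by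
  rw [← setOf_ofReal_inv_eq (hψ.pseudoInv_ne_zero (Ioo_subset_Ico_self ht))
    (hψ.pseudoInv_ne_top (Ioo_subset_Ioc_self ht))]
  exact ext fun r => hψ.psiExt_eq_iff (Ioo_subset_Ioc_self ht)

theorem preimage_psiExt_ofReal_inv_Iic (hψ : IsGenerator ψ) {t : ℝ} (ht : t ∈ Ioo 0 1) :
    (fun r : ℝ => psiExt ψ (ENNReal.ofReal r⁻¹)) ⁻¹' Iic t = Ioc 0 (pseudoInv ψ t).toReal⁻¹ := by
  rw [← setOf_le_ofReal_inv (hψ.pseudoInv_ne_zero (Ioo_subset_Ico_self ht))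
    (hψ.pseudoInv_ne_top (Ioo_subset_Ioc_self ht))]
  exact ext fun r => (hψ.pseudoInv_le_iff (Ioo_subset_Icc_self ht)).symm

theorem preimage_psiExt_ofReal_inv_zero (hψ : IsGenerator ψ) :
    (fun r : ℝ => psiExt ψ (ENNReal.ofReal r⁻¹)) ⁻¹' {0} =
      {r | pseudoInv ψ 0 ≤ ENNReal.ofReal r⁻¹} :=
  ext fun _ => hψ.psiExt_eq_zero_iff

theorem pseudoInv_zero_eq_top (hψ : IsGenerator ψ) (hstrict : IsStrictGenerator ψ) :
    pseudoInv ψ 0 = ∞ := by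
  by_contra h
  have := hψ.psiExt_pseudoInv (left_mem_Icc.2 zero_le_one)
  rw [psiExt_of_ne_top ψ h] at this
  exact (hstrict _ ENNReal.toReal_nonneg).ne' this

/-- `ψ` vanishes at `c = φ(0)`, so `(1 - t c)₊ ^ (d - 1) = 0` for `γ`-a.e. `t`, i.e.
`γ` does not charge `[0, 1 / c)`. -/
theorem measure_Ioc_inv_pseudoInv_zero (hψ : IsGenerator ψ) {d : ℕ} {γ : Measure ℝ}
    [IsProbabilityMeasure γ] (hγ : ∀ᵐ r ∂γ, 0 < r) (hW : ∀ z, 0 < z → ψ z = williamson d γ z)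
    (hfin : pseudoInv ψ 0 ≠ ∞) :
    γ (Ioc 0 (pseudoInv ψ 0).toReal⁻¹) = γ {(pseudoInv ψ 0).toReal⁻¹} := by
  set c := (pseudoInv ψ 0).toReal
  have hc : 0 < c := ENNReal.toReal_pos (hψ.pseudoInv_ne_zero ⟨le_rfl, zero_lt_one⟩) hfin
  have hint : ∫ t, max (1 - t * c) 0 ^ (d - 1) ∂γ = 0 := by
    rw [← williamson, ← hW c hc, ← psiExt_of_ne_top ψ hfin,
      hψ.psiExt_pseudoInv (left_mem_Icc.2 zero_le_one)]
  have hae := (integral_eq_zero_iff_of_nonneg (fun t => by positivity)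
    (integrable_williamson_integrand hγ hc.le (d - 1))).1 hint
  have hIio : γ (Iio c⁻¹) = 0 := by
    refine measure_mono_null (fun t (ht : t < c⁻¹) => ?_) (ae_iff.1 hae)
    have htc : t * c < 1 := by simpa [hc.ne'] using mul_lt_mul_of_pos_right ht hc
    exact (pow_pos (lt_max_of_lt_left (sub_pos.2 htc)) _).ne'
  refine le_antisymm ?_ (measure_mono (singleton_subset_iff.2 ⟨inv_pos.2 hc, le_rfl⟩))
  calc γ (Ioc 0 c⁻¹) ≤ γ (Iio c⁻¹ ∪ {c⁻¹}) :=
        measure_mono fun t ht => (ht.2.lt_or_eq).imp id id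
    _ ≤ γ {c⁻¹} := (measure_union_le _ _).trans (by rw [hIio, zero_add])

end IsGenerator

/-- For a `d`-monotone generator `ψ` with Williamson measure `γ`,
copula `C = C_ψ` and associated measure `μ_C`: (i) `μ_C(L_t) = γ({1/φ(t)})` for
`t ∈ (0,1)`; (ii) `μ_C(L₀) = 0` if `ψ` is strict, and `μ_C(L₀) = γ({1/φ(0)})` if `ψ` is
non-strict; (iii) `F_K^d(t) = γ([0, 1/φ(t)])` for `t ∈ (0,1)`. -/
theorem levelSet_mass_eq_williamson
    (d : ℕ) (hd : 3 ≤ d) (ψ : ℝ → ℝ) (hψ : IsdMonotoneGenerator d ψ)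
    (γ : Measure ℝ) (hprob : IsProbabilityMeasure γ)
    (hneg : γ (Iio 0) = 0) (h0 : γ {0} = 0)
    (hW : ∀ z : ℝ, 0 < z → ψ z = williamson d γ z)
    (μ : Measure (Fin d → ℝ)) (hμprob : IsProbabilityMeasure μ)
    (hμ : ∀ x : Fin d → ℝ, (∀ i, x i ∈ Icc (0 : ℝ) 1) →
      μ (Set.univ.pi fun i => Icc 0 (x i)) = ENNReal.ofReal (archCopula d ψ x)) :
    (∀ t ∈ Ioo (0 : ℝ) 1,
      μ (levelSet d ψ t) = γ {1 / (pseudoInv ψ t).toReal}) ∧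
    (IsStrictGenerator ψ → μ (levelSet d ψ 0) = 0) ∧
    (pseudoInv ψ 0 ≠ ∞ → μ (levelSet d ψ 0) = γ {1 / (pseudoInv ψ 0).toReal}) ∧
    (∀ t ∈ Ioo (0 : ℝ) 1,
      μ {x | (∀ i, x i ∈ Icc (0 : ℝ) 1) ∧ archCopula d ψ x ≤ t} =
        γ (Icc 0 (1 / (pseudoInv ψ t).toReal))) := by
  obtain ⟨n, rfl⟩ : ∃ n, d = n + 1 := ⟨d - 1, by omega⟩
  have hg := hψ.toIsGenerator
  have hγ : ∀ᵐ r ∂γ, 0 < r :=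
    measure_mono_null (fun r (hr : ¬0 < r) => (not_lt.1 hr).lt_or_eq) (measure_union_null hneg h0)
  have hlaw {A : Set ℝ} (hA : MeasurableSet A) :=
    IsArchimedeanCopulaMeasure.measure_archCopula_mem hμ hg (by omega) hγ hW hA
  have hlevel0 : μ (levelSet (n + 1) ψ 0) = γ {r | pseudoInv ψ 0 ≤ ENNReal.ofReal r⁻¹} := by
    rw [← hg.preimage_psiExt_ofReal_inv_zero]
    exact hlaw (measurableSet_singleton 0)
  simp only [one_div]
  refine ⟨fun t ht => ?_, fun hstrict => ?_, fun hfin => ?_, fun t ht => ?_⟩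
  · rw [← hg.preimage_psiExt_ofReal_inv_singleton ht]
    exact hlaw (measurableSet_singleton t)
  · simp [hlevel0, hg.pseudoInv_zero_eq_top hstrict]
  · rw [hlevel0, setOf_le_ofReal_inv (hg.pseudoInv_ne_zero ⟨le_rfl, zero_lt_one⟩) hfin,
      hg.measure_Ioc_inv_pseudoInv_zero hγ hW hfin]
  · rw [← measure_congr (Ioc_ae_eq_Icc' h0), ← hg.preimage_psiExt_ofReal_inv_Iic ht]
    exact hlaw measurableSet_Iic
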